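/- arXiv:2603.13863 — 2 statements merged into one kernel-verified Lean document; each statement's English description precedes it below -/
import Mathlib

section
/- Let d = xy and let ω_x = e^{2πi/x}, ω_y = e^{2πi/y}, ω_d = e^{2πi/d}. For m ∈ Z_y and s ∈ Z_x, the vector (1/√x) ∑_{k=0}^{x-1} ω_x^{sk} |a_{ky+m}⟩ equals (1/√y) ω_d^{-ms} ∑_{l=0}^{y-1} ω_y^{-ml} |b_{lx+s}⟩, where the two bases are related by the discrete Fourier transform ⟨a_i|b_j⟩ = ω_d^{ij}/√d. -/
open Finset Complex
open scoped ComplexOrder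

/-- ω_n = e^{2πi/n} -/
noncomputable def ww (n : ℕ) : ℂ := Complex.exp (2 * Real.pi * Complex.I / n)

/-- |ψ_{m,s}⟩ = (1/√x) ∑_{k<x} ω_x^{sk} |a_{ky+m}⟩ in ℂ^d (standard basis coords). -/
noncomputable def psi (d x y m s : ℕ) : Fin d → ℂ :=
  fun t => (1 / Real.sqrt x) *
    ∑ k ∈ Finset.range x, ww x ^ (s * k) * (if (t : ℕ) = k * y + m then 1 else 0)

/-- Fourier basis vector |b_j⟩, coordinates in the standard basis. -/
noncomputable def bvec (d j : ℕ) : Fin d → ℂ :=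
  fun i => ww d ^ ((i : ℕ) * j) / Real.sqrt d

/-- rank one projection |v⟩⟨v| as a matrix. -/
noncomputable def proj {d : ℕ} (v : Fin d → ℂ) : Matrix (Fin d) (Fin d) ℂ :=
  fun i j => v i * (starRingEnd ℂ) (v j)

/-- KD quasiprobability Q_{ij}(ρ) = ⟨a_i|ρ|b_j⟩⟨b_j|a_i⟩ (standard/Fourier bases). -/
noncomputable def KD {d : ℕ} (ρ : Matrix (Fin d) (Fin d) ℂ) (i j : Fin d) : ℂ :=
  (∑ l, ρ i l * bvec d (j : ℕ) l) * (starRingEnd ℂ) (bvec d (j : ℕ) i)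

/-- The set of KD-classical pure-state projections for the DFT pair in dimension d. -/
def pureKD (d : ℕ) : Set (Matrix (Fin d) (Fin d) ℂ) :=
  {M | ∃ x y m s : ℕ, x * y = d ∧ m < y ∧ s < x ∧ M = proj (psi d x y m s)}

/- The left side is supported on `t ≡ m (mod y)`. On the right, the sum over `l` is a geometric
sum in the `y`-th root of unity `ω_y^(t - m)`, hence equals `y` on that residue class and `0` off
it; there, writing `t = k y + m`, the phase `ω_d^(t s)` splits as `ω_x^(k s) ω_d^(m s)`. -/

lemma isPrimitiveRoot_ww {n : ℕ} (hn : n ≠ 0) : IsPrimitiveRoot (ww n) n :=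
  Complex.isPrimitiveRoot_exp n hn

lemma ww_ne_zero (n : ℕ) : ww n ≠ 0 :=
  Complex.exp_ne_zero _

lemma ww_mul_pow_left {x y : ℕ} (hx : x ≠ 0) : ww (x * y) ^ x = ww y := by
  rw [ww, ← Complex.exp_nat_mul, ww]
  congr 1
  push_cast
  field_simp

lemma ww_mul_pow_right {x y : ℕ} (hy : y ≠ 0) : ww (x * y) ^ y = ww x := by
  rw [mul_comm, ww_mul_pow_left hy]

lemma ww_pow_eq_ww_pow_iff {n a b : ℕ} (hn : n ≠ 0) :
    ww n ^ a = ww n ^ b ↔ a % n = b % n := by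
  have hω := isPrimitiveRoot_ww hn
  rw [(hω.isOfFinOrder hn).pow_inj_mod, ← hω.eq_orderOf]

lemma geom_sum_eq_ite_of_pow_eq_one {K : Type*} [Field K] [DecidableEq K] {ζ : K} {n : ℕ}
    (h : ζ ^ n = 1) : ∑ i ∈ range n, ζ ^ i = if ζ = 1 then (n : K) else 0 := by
  split_ifs with hζ
  · simp [hζ]
  · rw [geom_sum_eq hζ, h, sub_self, zero_div]

lemma sum_range_mul_ite_eq_mul_add {R : Type*} [Semiring R] (f : ℕ → R) {x y m t : ℕ}
    (hm : m < y) (ht : t < x * y) :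
    ∑ k ∈ range x, f k * (if t = k * y + m then 1 else 0)
      = if t % y = m then f (t / y) else 0 := by
  have hdiv : ∀ k, t = k * y + m ↔ t % y = m ∧ t / y = k := fun k => by
    rw [and_comm, Nat.div_mod_unique (by omega), mul_comm, add_comm, eq_comm, and_iff_left hm]
  simp_rw [mul_ite, mul_one, mul_zero, hdiv]
  split_ifs with h
  · simp [h, (Nat.div_lt_iff_lt_mul (by omega)).2 ht]
  · simp [h]

lemma sum_inv_pow_mul_bvec {x y m s : ℕ} (hx : x ≠ 0) (hy : y ≠ 0) (hm : m < y)
    (t : Fin (x * y)) :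
    ∑ l ∈ range y, (ww y ^ (m * l))⁻¹ * bvec (x * y) (l * x + s) t
      = if (t : ℕ) % y = m then y * ww (x * y) ^ ((t : ℕ) * s) / Real.sqrt (x * y : ℕ)
        else 0 := by
  have hω := isPrimitiveRoot_ww hy
  have hterm : ∀ l, (ww y ^ (m * l))⁻¹ * bvec (x * y) (l * x + s) t
      = ww (x * y) ^ ((t : ℕ) * s) / Real.sqrt (x * y : ℕ)
        * (ww y ^ (t : ℕ) / ww y ^ m) ^ l := by
    intro l
    have hpow : ww (x * y) ^ ((t : ℕ) * (l * x + s))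
        = ww y ^ ((t : ℕ) * l) * ww (x * y) ^ ((t : ℕ) * s) := by
      rw [mul_add, pow_add, show (t : ℕ) * (l * x) = x * ((t : ℕ) * l) by ring, pow_mul,
        ww_mul_pow_left hx]
    rw [bvec, hpow, div_pow, ← pow_mul, ← pow_mul]
    ring
  have hζ : (ww y ^ (t : ℕ) / ww y ^ m) ^ y = 1 := by
    rw [div_pow, ← pow_mul, ← pow_mul, mul_comm _ y, mul_comm m y, pow_mul, pow_mul,
      hω.pow_eq_one, one_pow, one_pow, div_one]
  have hζ_eq_one : ww y ^ (t : ℕ) / ww y ^ m = 1 ↔ (t : ℕ) % y = m := by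
    rw [div_eq_one_iff_eq (pow_ne_zero _ (ww_ne_zero y)), ww_pow_eq_ww_pow_iff hy,
      Nat.mod_eq_of_lt hm]
  simp_rw [hterm, ← Finset.mul_sum, geom_sum_eq_ite_of_pow_eq_one hζ, hζ_eq_one]
  split_ifs <;> ring

theorem psi_two_expressions_general (d x y m s : ℕ) (hx : 0 < x) (hy : 0 < y)
    (hd : d = x * y) (hm : m < y) (t : Fin d) :
    (1 / Real.sqrt x) *
      ∑ k ∈ Finset.range x, ww x ^ (s * k) * (if (t : ℕ) = k * y + m then 1 else 0)
    = (1 / Real.sqrt y) * (ww d ^ (m * s))⁻¹ *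
      ∑ l ∈ Finset.range y, (ww y ^ (m * l))⁻¹ * bvec d (l * x + s) t := by
  subst hd
  rw [sum_range_mul_ite_eq_mul_add _ hm t.isLt, sum_inv_pow_mul_bvec hx.ne' hy.ne' hm]
  split_ifs with ht
  · have hω : ww (x * y) ^ ((t : ℕ) * s) = ww x ^ (s * (t / y)) * ww (x * y) ^ (m * s) := by
      conv_lhs => rw [← Nat.div_add_mod t y, ht]
      rw [add_mul, pow_add, show y * (t / y) * s = y * (s * (t / y)) by ring, pow_mul,
        ww_mul_pow_right hy.ne']
    have hsqrt : (Real.sqrt (x * y : ℕ) : ℂ) = Real.sqrt x * Real.sqrt y := by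
      rw [Nat.cast_mul, Real.sqrt_mul (Nat.cast_nonneg x), Complex.ofReal_mul]
    have hy_sq : (Real.sqrt y : ℂ) * Real.sqrt y = y := by
      rw [← Complex.ofReal_mul, Real.mul_self_sqrt (Nat.cast_nonneg y), Complex.ofReal_natCast]
    have hx_sqrt : (Real.sqrt x : ℂ) ≠ 0 := by positivity
    have hy_sqrt : (Real.sqrt y : ℂ) ≠ 0 := by positivity
    have hω_ms : ww (x * y) ^ (m * s) ≠ 0 := pow_ne_zero _ (ww_ne_zero _)
    rw [hω, hsqrt, ← hy_sq]
    field_simp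
  · simp

/-- the two expressions for the KD-classical pure state |ψ_{ms}⟩ agree:
    (1/√x)∑_k ω_x^{sk}|a_{ky+m}⟩ = (1/√y) ω_d^{-ms} ∑_l ω_y^{-ml} |b_{lx+s}⟩. -/
theorem psi_two_expressions (d x y m s : ℕ) (hx : 0 < x) (hy : 0 < y)
    (hd : d = x * y) (hm : m < y) (hs : s < x) (t : Fin d) :
    (1 / Real.sqrt x) *
      ∑ k ∈ Finset.range x, ww x ^ (s * k) * (if (t : ℕ) = k * y + m then 1 else 0)
    = (1 / Real.sqrt y) * (ww d ^ (m * s))⁻¹ *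
      ∑ l ∈ Finset.range y, (ww y ^ (m * l))⁻¹ * bvec d (l * x + s) t :=
  psi_two_expressions_general d x y m s hx hy hd hm t
end

section
/- Let d = xy with x > 1, and let x̃ = x/p and ỹ = yp for a prime p dividing x. For the KD-classical pure states ψ_{ms} associated with factorization d = xy and ψ_{m̃s̃} associated with factorization d = x̃ỹ (as projection operators), the following operator identity holds in the case d = p^r: ∑_{j_{α-1}=0}^{p-1} |ψ_{(i_0,…,i_{β-1}),(j_0,…,j_{α-1})}⟩⟨ψ_{(i_0,…,i_{β-1}),(j_0,…,j_{α-1})}| = ∑_{i_β=0}^{p-1} |ψ_{(i_0,…,i_β),(j_0,…,j_{α-2})}⟩⟨ψ_{(i_0,…,i_β),(j_0,…,j_{α-2})}|, where indices are written in p-adic expansion with x = p^α, y = p^β, α + β = r, and 1 ≤ α ≤ r-1. -/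
open Finset Complex
open scoped ComplexOrder

lemma ww_pow_self (n : ℕ) : ww n ^ n = 1 := by
  rcases eq_or_ne n 0 with rfl | hn
  · exact pow_zero _
  · exact (isPrimitiveRoot_ww hn).pow_eq_one

lemma ww_mul_pow {a b : ℕ} (ha : a ≠ 0) (hb : b ≠ 0) : ww (a * b) ^ a = ww b := by
  rw [ww, ww, ← Complex.exp_nat_mul]
  congr 1
  push_cast
  field_simp

lemma conj_ww (n : ℕ) : starRingEnd ℂ (ww n) = (ww n)⁻¹ := by
  rcases eq_or_ne n 0 with rfl | hn
  · simp [ww]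
  · exact (Complex.inv_eq_conj ((isPrimitiveRoot_ww hn).norm'_eq_one hn)).symm

lemma sum_ww_pow_mul_conj {p i i' : ℕ} (hi : i < p) (hi' : i' < p) :
    ∑ j ∈ range p, ww p ^ (j * i) * starRingEnd ℂ (ww p ^ (j * i')) =
      if i = i' then (p : ℂ) else 0 := by
  have hp : p ≠ 0 := by omega
  have hζ := isPrimitiveRoot_ww hp
  have hterm : ∀ j, ww p ^ (j * i) * starRingEnd ℂ (ww p ^ (j * i')) =
      (ww p ^ i * (ww p ^ i')⁻¹) ^ j := by
    intro j
    rw [map_pow, conj_ww]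
    ring
  simp_rw [hterm]
  split_ifs with h
  · simp [h, ww_ne_zero p]
  · have hne : ww p ^ i * (ww p ^ i')⁻¹ ≠ 1 := by
      rw [Ne, mul_inv_eq_one₀ (pow_ne_zero _ (ww_ne_zero p))]
      exact fun he => h (hζ.pow_inj hi hi' he)
    have hpow : (ww p ^ i * (ww p ^ i')⁻¹) ^ p = 1 := by
      rw [mul_pow, inv_pow, ← pow_mul, ← pow_mul, mul_comm i, mul_comm i', pow_mul, pow_mul,
        hζ.pow_eq_one, one_pow, one_pow, inv_one, mul_one]
    rw [geom_sum_eq hne, hpow, sub_self, zero_div]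

noncomputable def digitCoeff (n p s j i : ℕ) : ℂ :=
  (1 / Real.sqrt p : ℝ) * ww n ^ (s * i) * ww p ^ (j * i)

lemma sum_digit_coeff_mul_conj (n p s : ℕ) {i i' : ℕ} (hi : i < p) (hi' : i' < p) :
    ∑ j ∈ range p, digitCoeff n p s j i * starRingEnd ℂ (digitCoeff n p s j i') =
      if i = i' then 1 else 0 := by
  have hp : (p : ℂ) ≠ 0 := by exact_mod_cast (show p ≠ 0 by omega)
  have hsqrt :
      ((1 / Real.sqrt p : ℝ) : ℂ) * starRingEnd ℂ ((1 / Real.sqrt p : ℝ) : ℂ) = 1 / p := by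
    rw [Complex.conj_ofReal, ← Complex.ofReal_mul, one_div_mul_one_div,
      Real.mul_self_sqrt (Nat.cast_nonneg p)]
    push_cast; rfl
  simp only [digitCoeff, map_mul]
  calc _ = 1 / p * (ww n ^ (s * i) * starRingEnd ℂ (ww n ^ (s * i'))) *
        ∑ j ∈ range p, ww p ^ (j * i) * starRingEnd ℂ (ww p ^ (j * i')) := by
        rw [mul_sum, ← hsqrt]
        exact sum_congr rfl fun j _ => by ring
    _ = _ := by
        rw [sum_ww_pow_mul_conj hi hi']
        split_ifs with h
        · subst h
          rw [map_pow, conj_ww, inv_pow, mul_inv_cancel₀ (pow_ne_zero _ (ww_ne_zero n))]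
          field_simp
        · simp

lemma sum_range_mul_eq_sum_sum {M : Type*} [AddCommMonoid M] (f : ℕ → M) (a b : ℕ) :
    ∑ k ∈ range (a * b), f k = ∑ q ∈ range a, ∑ i ∈ range b, f (q * b + i) := by
  induction a with
  | zero => simp
  | succ a ih => rw [add_mul, one_mul, sum_range_add, ih, sum_range_succ]

lemma sum_proj_sum_smul {d : ℕ} {κ ι : Type*} [DecidableEq ι] (J : Finset κ) (I : Finset ι)
    (c : κ → ι → ℂ) (φ : ι → Fin d → ℂ)
    (hc : ∀ i ∈ I, ∀ i' ∈ I,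
      ∑ j ∈ J, c j i * starRingEnd ℂ (c j i') = if i = i' then 1 else 0) :
    ∑ j ∈ J, proj (∑ i ∈ I, c j i • φ i) = ∑ i ∈ I, proj (φ i) := by
  ext t u
  simp only [Matrix.sum_apply, proj, Finset.sum_apply, Pi.smul_apply, smul_eq_mul, map_sum,
    map_mul, sum_mul_sum]
  calc ∑ j ∈ J, ∑ i ∈ I, ∑ i' ∈ I,
        c j i * φ i t * (starRingEnd ℂ (c j i') * starRingEnd ℂ (φ i' u))
      = ∑ i ∈ I, ∑ i' ∈ I, (∑ j ∈ J, c j i * starRingEnd ℂ (c j i')) *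
          (φ i t * starRingEnd ℂ (φ i' u)) := by
        rw [sum_comm]
        refine sum_congr rfl fun i _ => ?_
        rw [sum_comm]
        refine sum_congr rfl fun i' _ => ?_
        rw [sum_mul]
        exact sum_congr rfl fun j _ => by ring
    _ = ∑ i ∈ I, φ i t * starRingEnd ℂ (φ i u) := by
        refine sum_congr rfl fun i hi => ?_
        rw [sum_congr rfl fun i' hi' => by rw [hc i hi i' hi']]
        simp [hi]

lemma ww_mul_pow_digits {A p : ℕ} (hA : A ≠ 0) (hp : p ≠ 0) (s j q i : ℕ) :
    ww (A * p) ^ ((s + j * A) * (q * p + i)) =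
      ww A ^ (s * q) * ww (A * p) ^ (s * i) * ww p ^ (j * i) := by
  have hexp : (s + j * A) * (q * p + i) =
      p * (s * q) + s * i + A * p * (j * q) + A * (j * i) := by ring
  have hp' : ww (A * p) ^ p = ww A := by rw [mul_comm]; exact ww_mul_pow hp hA
  rw [hexp, pow_add, pow_add, pow_add, pow_mul _ p, pow_mul _ A, pow_mul _ (A * p), hp',
    ww_pow_self, one_pow, mul_one, ww_mul_pow hA hp]

lemma psi_mul_eq_sum_smul (d A p y m s j : ℕ) (hA : A ≠ 0) (hp : p ≠ 0) :
    psi d (A * p) y m (s + j * A) =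
      ∑ i ∈ range p, digitCoeff (A * p) p s j i • psi d A (y * p) (m + i * y) s := by
  funext t
  simp only [psi, digitCoeff, Finset.sum_apply, Pi.smul_apply, smul_eq_mul, mul_sum,
    sum_range_mul_eq_sum_sum]
  rw [sum_comm]
  refine sum_congr rfl fun i _ => sum_congr rfl fun q _ => ?_
  have hidx : (q * p + i) * y + m = q * (y * p) + (m + i * y) := by ring
  rw [ww_mul_pow_digits hA hp, hidx]
  push_cast
  rw [Real.sqrt_mul (Nat.cast_nonneg A)]
  push_cast
  ring

theorem sum_proj_psi_top_digit (d A p y m s : ℕ) (hA : A ≠ 0) (hp : p ≠ 0) :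
    ∑ j ∈ range p, proj (psi d (A * p) y m (s + j * A)) =
      ∑ i ∈ range p, proj (psi d A (y * p) (m + i * y) s) := by
  simp_rw [psi_mul_eq_sum_smul d A p y m s _ hA hp]
  exact sum_proj_sum_smul _ _ _ _ fun i hi i' hi' =>
    sum_digit_coeff_mul_conj _ p s (mem_range.mp hi) (mem_range.mp hi')

theorem kd_pure_digit_identity_general (p r α β m s' : ℕ) (hp : p.Prime) (hα1 : 1 ≤ α) :
    ∑ j ∈ Finset.range p, proj (psi (p ^ r) (p ^ α) (p ^ β) m (s' + j * p ^ (α - 1)))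
    = ∑ i ∈ Finset.range p, proj (psi (p ^ r) (p ^ (α - 1)) (p ^ (β + 1)) (m + i * p ^ β) s') := by
  have hx : p ^ α = p ^ (α - 1) * p := by rw [← pow_succ, Nat.sub_add_cancel hα1]
  rw [hx, pow_succ]
  exact sum_proj_psi_top_digit _ _ _ _ _ _ (pow_ne_zero _ hp.ne_zero) hp.ne_zero

/-- Lemma 1, d = p^r: summing the projections onto the KD-classical pure
    states over the top p-adic digit of s (factorization x = p^α, y = p^β) equals the sum
    over the top digit of m for the factorization x̃ = p^{α-1}, ỹ = p^{β+1}. -/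
theorem kd_pure_digit_identity (p r α β m s' : ℕ) (hp : p.Prime) (hr : 2 ≤ r)
    (hαβ : α + β = r) (hα1 : 1 ≤ α) (hα2 : α ≤ r - 1)
    (hm : m < p ^ β) (hs : s' < p ^ (α - 1)) :
    ∑ j ∈ Finset.range p, proj (psi (p ^ r) (p ^ α) (p ^ β) m (s' + j * p ^ (α - 1)))
    = ∑ i ∈ Finset.range p, proj (psi (p ^ r) (p ^ (α - 1)) (p ^ (β + 1)) (m + i * p ^ β) s') :=
  kd_pure_digit_identity_general p r α β m s' hp hα1
end
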